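/- arXiv:1601.00167 — 4 statements merged into one kernel-verified Lean document; each statement's English description precedes it below -/
import Mathlib

section
/- (Threshold characterization.) For constants Ψ₁ > 0, Ψ₂ > 0, 0 < δ < T, and any expected service level Ŝ > 0, the strategy δ yields a strictly higher User payoff than the strategy T, i.e. Ψ₁/δ + Ψ₂·Ŝ·δ > Ψ₁/T + Ψ₂·Ŝ·T, if and only if Ŝ < μ, where μ = (Ψ₁/Ψ₂)·1/(δ·T). -/
lemma div_add_mul_lt_div_add_mul_iff {a b s t : ℝ} (hs : 0 < s) (hst : s < t) :
    a / t + b * t < a / s + b * s ↔ b < a / (s * t) := by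
  have ht : 0 < t := hs.trans hst
  have hdiff : a / s + b * s - (a / t + b * t) = (t - s) * (a / (s * t) - b) := by
    field_simp
    ring
  rw [← sub_pos, hdiff, mul_pos_iff_of_pos_left (sub_pos.mpr hst), sub_pos]

theorem threshold_characterization_general
    (Ψ₁ Ψ₂ Shat δ T : ℝ) (hΨ₂ : 0 < Ψ₂)
    (hδ : 0 < δ) (hδT : δ < T) :
    Ψ₁ / δ + Ψ₂ * Shat * δ > Ψ₁ / T + Ψ₂ * Shat * T ↔ Shat < Ψ₁ / Ψ₂ * (1 / (δ * T)) := by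
  rw [gt_iff_lt, div_add_mul_lt_div_add_mul_iff hδ hδT, mul_comm Ψ₂, ← lt_div_iff₀ hΨ₂,
    mul_one_div, div_right_comm]

/-- Threshold characterization: `δ` beats `T` iff `Shat < μ = (Ψ₁/Ψ₂)·1/(δ·T)`. -/
theorem threshold_characterization
    (Ψ₁ Ψ₂ Shat δ T : ℝ) (hΨ₁ : 0 < Ψ₁) (hΨ₂ : 0 < Ψ₂) (hShat : 0 < Shat)
    (hδ : 0 < δ) (hδT : δ < T) :
    Ψ₁ / δ + Ψ₂ * Shat * δ > Ψ₁ / T + Ψ₂ * Shat * T ↔ Shat < Ψ₁ / Ψ₂ * (1 / (δ * T)) :=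
  threshold_characterization_general Ψ₁ Ψ₂ Shat δ T hΨ₂ hδ hδT
end

section
/- (Theorem 1, case Ŝ < μ.) For constants Ψ₁ > 0, Ψ₂ > 0, 0 < δ < T, and expected service level Ŝ with 0 < Ŝ < μ where μ = (Ψ₁/Ψ₂)·1/(δ·T), the connection time δ is the unique best response of the User: for every t ∈ [δ, T] with t ≠ δ, Ψ₁/δ + Ψ₂·Ŝ·δ > Ψ₁/t + Ψ₂·Ŝ·t. -/
/-! Since `U(δ) - U(t) = (t - δ) · (Ψ₁ / (δ t) - Ψ₂ Ŝ)`, and `Ψ₁ / (δ t) ≥ Ψ₁ / (δ T) > Ψ₂ Ŝ`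
for `t ≤ T` because `Ŝ` is below the threshold `μ`, every `t > δ` is strictly worse than `δ`. -/

theorem div_add_mul_sub_div_add_mul (a b : ℝ) {s t : ℝ} (hs : s ≠ 0) (ht : t ≠ 0) :
    (a / s + b * s) - (a / t + b * t) = (t - s) * (a / (s * t) - b) := by
  field_simp
  ring

theorem div_add_mul_lt_div_add_mul {a b s t : ℝ} (hs : 0 < s) (hst : s < t)
    (hb : b < a / (s * t)) : a / t + b * t < a / s + b * s := by
  have hgap : 0 < (a / s + b * s) - (a / t + b * t) := by
    rw [div_add_mul_sub_div_add_mul a b hs.ne' (hs.trans hst).ne']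
    exact mul_pos (sub_pos.mpr hst) (sub_pos.mpr hb)
  linarith

theorem best_response_below_threshold_general
    (Ψ₁ Ψ₂ Shat δ T : ℝ) (hΨ₁ : 0 < Ψ₁) (hΨ₂ : 0 < Ψ₂)
    (hδ : 0 < δ)
    (hShat : Shat < Ψ₁ / Ψ₂ * (1 / (δ * T))) :
    ∀ t ∈ Set.Icc δ T, t ≠ δ →
      Ψ₁ / δ + Ψ₂ * Shat * δ > Ψ₁ / t + Ψ₂ * Shat * t := by
  rintro t ⟨hδle, htT⟩ htδ
  have hδt : δ < t := hδle.lt_of_ne' htδ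
  have hbelow : Ψ₂ * Shat < Ψ₁ / (δ * T) :=
    calc Ψ₂ * Shat < Ψ₂ * (Ψ₁ / Ψ₂ * (1 / (δ * T))) := mul_lt_mul_of_pos_left hShat hΨ₂
      _ = Ψ₁ / (δ * T) := by field_simp
  have hmono : Ψ₁ / (δ * T) ≤ Ψ₁ / (δ * t) :=
    div_le_div_of_nonneg_left hΨ₁.le (mul_pos hδ (hδ.trans hδt))
      (mul_le_mul_of_nonneg_left htT hδ.le)
  exact div_add_mul_lt_div_add_mul hδ hδt (hbelow.trans_le hmono)

/-- Theorem 1, case `Shat < μ`: the connection time `δ` is the unique best response. -/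
theorem best_response_below_threshold
    (Ψ₁ Ψ₂ Shat δ T : ℝ) (hΨ₁ : 0 < Ψ₁) (hΨ₂ : 0 < Ψ₂)
    (hδ : 0 < δ) (hδT : δ < T)
    (hShatpos : 0 < Shat) (hShat : Shat < Ψ₁ / Ψ₂ * (1 / (δ * T))) :
    ∀ t ∈ Set.Icc δ T, t ≠ δ →
      Ψ₁ / δ + Ψ₂ * Shat * δ > Ψ₁ / t + Ψ₂ * Shat * t :=
  best_response_below_threshold_general Ψ₁ Ψ₂ Shat δ T hΨ₁ hΨ₂ hδ hShat
end

section
/- (Monotonicity of the User's best response in the offered service level.) For constants Ψ₁ > 0, Ψ₂ > 0 and 0 < δ < T, suppose 0 < Ŝ₁ < Ŝ₂, t₁ ∈ [δ, T] maximizes the User's payoff U(Ŝ₁, ·) over [δ, T], and t₂ ∈ [δ, T] maximizes U(Ŝ₂, ·) over [δ, T]. Then t₁ ≤ t₂. -/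
/-! Revealed preference: adding the two optimality inequalities cancels the common term `Ψ₁ / t`
and leaves `Ψ₂ (Ŝ₂ - Ŝ₁) (t₁ - t₂) ≤ 0`. More generally, maximizers of `f + c * g` over a fixed
set are monotone in `c` whenever `g` is strictly monotone. -/

theorem IsMaxOn.le_of_strictMono_add_mul {α : Type*} [LinearOrder α] {f g : α → ℝ}
    (hg : StrictMono g) {s : Set α} {c₁ c₂ : ℝ} (hc : c₁ < c₂) {a₁ a₂ : α}
    (h₁ : IsMaxOn (fun x => f x + c₁ * g x) s a₁) (h₂ : IsMaxOn (fun x => f x + c₂ * g x) s a₂)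
    (ha₁ : a₁ ∈ s) (ha₂ : a₂ ∈ s) : a₁ ≤ a₂ := by
  have h₁₂ : f a₂ + c₁ * g a₂ ≤ f a₁ + c₁ * g a₁ := h₁ ha₂
  have h₂₁ : f a₁ + c₂ * g a₁ ≤ f a₂ + c₂ * g a₂ := h₂ ha₁
  have hprod : (c₂ - c₁) * (g a₁ - g a₂) ≤ 0 := by linarith
  have hga : g a₁ ≤ g a₂ := sub_nonpos.mp (nonpos_of_mul_nonpos_right hprod (sub_pos.mpr hc))
  exact hg.le_iff_le.mp hga

theorem best_response_monotone_general
    (Ψ₁ Ψ₂ δ T Shat₁ Shat₂ t₁ t₂ : ℝ) (hΨ₂ : 0 < Ψ₂)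
    (hShat : Shat₁ < Shat₂)
    (ht₁mem : t₁ ∈ Set.Icc δ T) (ht₂mem : t₂ ∈ Set.Icc δ T)
    (ht₁ : ∀ t ∈ Set.Icc δ T, Ψ₁ / t + Ψ₂ * Shat₁ * t ≤ Ψ₁ / t₁ + Ψ₂ * Shat₁ * t₁)
    (ht₂ : ∀ t ∈ Set.Icc δ T, Ψ₁ / t + Ψ₂ * Shat₂ * t ≤ Ψ₁ / t₂ + Ψ₂ * Shat₂ * t₂) :
    t₁ ≤ t₂ := by
  have payoff_eq (S t : ℝ) : Ψ₂ * S * t = S * (Ψ₂ * t) := by ring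
  refine IsMaxOn.le_of_strictMono_add_mul (f := fun t => Ψ₁ / t) (strictMono_mul_left_of_pos hΨ₂)
    hShat (fun t ht => ?_) (fun t ht => ?_) ht₁mem ht₂mem
  · simpa only [payoff_eq, Set.mem_ofPred_eq] using ht₁ t ht
  · simpa only [payoff_eq, Set.mem_ofPred_eq] using ht₂ t ht

/-- Monotonicity of the User's best response in the offered service level. -/
theorem best_response_monotone
    (Ψ₁ Ψ₂ δ T Shat₁ Shat₂ t₁ t₂ : ℝ) (hΨ₁ : 0 < Ψ₁) (hΨ₂ : 0 < Ψ₂)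
    (hδ : 0 < δ) (hδT : δ < T)
    (hShat₁ : 0 < Shat₁) (hShat : Shat₁ < Shat₂)
    (ht₁mem : t₁ ∈ Set.Icc δ T) (ht₂mem : t₂ ∈ Set.Icc δ T)
    (ht₁ : ∀ t ∈ Set.Icc δ T, Ψ₁ / t + Ψ₂ * Shat₁ * t ≤ Ψ₁ / t₁ + Ψ₂ * Shat₁ * t₁)
    (ht₂ : ∀ t ∈ Set.Icc δ T, Ψ₁ / t + Ψ₂ * Shat₂ * t ≤ Ψ₁ / t₂ + Ψ₂ * Shat₂ * t₂) :
    t₁ ≤ t₂ :=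
  best_response_monotone_general Ψ₁ Ψ₂ δ T Shat₁ Shat₂ t₁ t₂ hΨ₂ hShat ht₁mem ht₂mem ht₁ ht₂
end

section
/- (Theorem 2: the Company's optimal strategy.) Let A = {1, …, n} be a finite set of User types with weights α_i ≥ 0 summing to 1, let Ψ > 0, Θ > 0, 0 < δ < T, and let μ_i > 0 be the threshold of type i. For Ŝ ∈ ℝ define the best-response connection time t_i*(Ŝ) = δ if Ŝ < μ_i and t_i*(Ŝ) = T if Ŝ ≥ μ_i, and the Company's payoff U_C(Ŝ) = Σ_{i∈A} α_i·(Ψ·t_i*(Ŝ) − Θ·Ŝ). Then for any strategy interval [S_min, S_max] with S_min ≤ S_max, there exists Ŝ* belonging to the finite set {S_min} ∪ {μ_i : i ∈ A, S_min ≤ μ_i ≤ S_max} such that U_C(Ŝ*) ≥ U_C(Ŝ) for all Ŝ ∈ [S_min, S_max]; in particular U_C attains its maximum over [S_min, S_max], and it does so either at S_min or at one of the thresholds μ_i. -/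
/-!
Between two consecutive candidate points every User type gives the same best response, so on
such a stretch the Company's payoff only loses the service cost `Θ * Ŝ`. Hence any `Ŝ` is
dominated by the largest candidate below it, and the best candidate is a global maximiser.
-/

open Finset

noncomputable def companyPayoff {ι : Type*} [Fintype ι] (α μ : ι → ℝ) (Ψ Θ δ T S : ℝ) : ℝ :=
  ∑ i, α i * (Ψ * (if S < μ i then δ else T) - Θ * S)

theorem companyPayoff_le_of_forall_notMem_Ioc {ι : Type*} [Fintype ι] {α μ : ι → ℝ}
    {Ψ Θ δ T s x : ℝ} (hα : ∀ i, 0 ≤ α i) (hΘ : 0 ≤ Θ) (hsx : s ≤ x)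
    (hμ : ∀ i, μ i ∉ Set.Ioc s x) :
    companyPayoff α μ Ψ Θ δ T x ≤ companyPayoff α μ Ψ Θ δ T s := by
  refine sum_le_sum fun i _ => mul_le_mul_of_nonneg_left ?_ (hα i)
  have same_response : (x < μ i ↔ s < μ i) :=
    ⟨hsx.trans_lt, fun hs => not_le.mp fun hx => hμ i ⟨hs, hx⟩⟩
  rw [if_congr same_response rfl rfl]
  gcongr

theorem exists_mem_forall_le_of_forall_notMem_Ioc {f : ℝ → ℝ} {F : Finset ℝ} {a b : ℝ}
    (ha : a ∈ F)
    (hf : ∀ s ∈ F, ∀ x, a ≤ s → s ≤ x → x ≤ b → (∀ y ∈ F, y ∉ Set.Ioc s x) → f x ≤ f s) :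
    ∃ c ∈ F, ∀ x ∈ Set.Icc a b, f x ≤ f c := by
  obtain ⟨c, hcF, hc⟩ := F.exists_max_image f ⟨a, ha⟩
  refine ⟨c, hcF, fun x ⟨hax, hxb⟩ => ?_⟩
  obtain ⟨s, hs, hs_max⟩ :=
    (F.filter (· ≤ x)).exists_max_image id ⟨a, mem_filter.mpr ⟨ha, hax⟩⟩
  obtain ⟨hsF, hsx⟩ := mem_filter.mp hs
  have has : a ≤ s := hs_max a (mem_filter.mpr ⟨ha, hax⟩)
  refine (hf s hsF x has hsx hxb fun y hy ⟨hsy, hyx⟩ => ?_).trans (hc s hsF)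
  exact (hs_max y (mem_filter.mpr ⟨hy, hyx⟩)).not_gt hsy

theorem company_optimal_strategy_general
    (n : ℕ) (α : Fin n → ℝ) (hα : ∀ i, 0 ≤ α i)
    (Ψ Θ δ T : ℝ) (hΘ : 0 < Θ)
    (μ : Fin n → ℝ)
    (tstar : ℝ → Fin n → ℝ)
    (htstar : ∀ Shat i, tstar Shat i = if Shat < μ i then δ else T)
    (UC : ℝ → ℝ)
    (hUC : ∀ Shat, UC Shat = ∑ i, α i * (Ψ * tstar Shat i - Θ * Shat))
    (Smin Smax : ℝ) :
    ∃ Shatstar,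
      (Shatstar = Smin ∨ ∃ i, Shatstar = μ i ∧ Smin ≤ μ i ∧ μ i ≤ Smax) ∧
      ∀ Shat ∈ Set.Icc Smin Smax, UC Shat ≤ UC Shatstar := by
  have hUC_eq : UC = companyPayoff α μ Ψ Θ δ T :=
    funext fun S => by simp only [hUC, htstar, companyPayoff]
  set F : Finset ℝ :=
    insert Smin ((univ.filter fun i => Smin ≤ μ i ∧ μ i ≤ Smax).image μ) with hF
  obtain ⟨c, hcF, hc⟩ :=
    exists_mem_forall_le_of_forall_notMem_Ioc (f := UC) (F := F) (mem_insert_self Smin _)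
      fun s _ x hs hsx hxb hF_Ioc => by
        rw [hUC_eq]
        refine companyPayoff_le_of_forall_notMem_Ioc hα hΘ.le hsx fun i ⟨his, hix⟩ => ?_
        refine hF_Ioc (μ i) ?_ ⟨his, hix⟩
        simp only [hF, mem_insert, mem_image, mem_filter, mem_univ, true_and]
        exact Or.inr ⟨i, ⟨hs.trans his.le, hix.trans hxb⟩, rfl⟩
  refine ⟨c, ?_, hc⟩
  simp only [hF, mem_insert, mem_image, mem_filter, mem_univ, true_and] at hcF
  rcases hcF with hc_min | ⟨i, hi, rfl⟩
  · exact Or.inl hc_min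
  · exact Or.inr ⟨i, rfl, hi⟩

/-- Theorem 2: the Company's optimal strategy is attained either at the
minimum service level `Smin` or at one of the User thresholds `μ i`. -/
theorem company_optimal_strategy
    (n : ℕ) (α : Fin n → ℝ) (hα : ∀ i, 0 ≤ α i) (hsum : ∑ i, α i = 1)
    (Ψ Θ δ T : ℝ) (hΨ : 0 < Ψ) (hΘ : 0 < Θ) (hδ : 0 < δ) (hδT : δ < T)
    (μ : Fin n → ℝ) (hμ : ∀ i, 0 < μ i)
    (tstar : ℝ → Fin n → ℝ)
    (htstar : ∀ Shat i, tstar Shat i = if Shat < μ i then δ else T)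
    (UC : ℝ → ℝ)
    (hUC : ∀ Shat, UC Shat = ∑ i, α i * (Ψ * tstar Shat i - Θ * Shat))
    (Smin Smax : ℝ) (hS : Smin ≤ Smax) :
    ∃ Shatstar,
      (Shatstar = Smin ∨ ∃ i, Shatstar = μ i ∧ Smin ≤ μ i ∧ μ i ≤ Smax) ∧
      ∀ Shat ∈ Set.Icc Smin Smax, UC Shat ≤ UC Shatstar :=
  company_optimal_strategy_general n α hα Ψ Θ δ T hΘ μ tstar htstar UC hUC Smin Smax
end
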